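/- Let K be a perfect Polish space. Then the sequential monotone closure CD_ω(K)^{σm} (realized in B(K) as {f ∈ B(K) : ∃ g ∈ DBSC(K), [f≠g] at most countable}) is not uniformly complete; specifically, the principal ideal generated by the constant function 1 is not complete under the order-unit norm ||·||_{1_K}. -/

import Mathlib

/-- f is a bounded real function (member of B(K)). -/
def Bdd {K : Type*} (f : K → ℝ) : Prop := ∃ C : ℝ, ∀ x, |f x| ≤ C

/-- g is a difference of bounded semicontinuous functions. -/
def DBSC {K : Type*} [TopologicalSpace K] (g : K → ℝ) : Prop :=
  ∃ h k : K → ℝ, Bdd h ∧ Bdd k ∧ LowerSemicontinuous h ∧ LowerSemicontinuous k ∧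
    g = h - k


/-!
`K` contains a closed copy of the grid `ℕ → ℕ → Bool`. On the grid let `level i` be the set of
points whose last nonzero row is row `i`, and let `f` be `(-1)^i/(i+1)` on `level i` and `0`
elsewhere, extended by zero to `K`. Cutting `f` off after the first `n` levels gives DBSC
functions within `1/(n+1)` of `f`; they form a uniform Cauchy sequence whose only possible
uniform limit is `f`.

But `f` agrees with no DBSC function `h - k` off a countable set `C`. Every point of `level i`
is a limit of uncountably many points of `level (i+1)`, so lower semicontinuity yields points
`y i ∈ level i \ C` along which `h` and `k` decrease by at most `|f (y (i+1))| / 2`, while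
`h - k = f` jumps by `|f (y i)| + |f (y (i+1))|`. Hence `h + k` grows by at least `1/(i+1)` at
each step, contradicting the boundedness of `h` and `k`.
-/

open Set Filter Topology Function

section Bdd

variable {α β : Type*}

lemma Bdd.add {f g : α → ℝ} (hf : Bdd f) (hg : Bdd g) : Bdd (f + g) := by
  obtain ⟨C, hC⟩ := hf
  obtain ⟨D, hD⟩ := hg
  exact ⟨C + D, fun x => (abs_add_le _ _).trans (add_le_add (hC x) (hD x))⟩

lemma Bdd.neg {f : α → ℝ} (hf : Bdd f) : Bdd (-f) := by
  obtain ⟨C, hC⟩ := hf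
  exact ⟨C, fun x => by simpa using hC x⟩

lemma Bdd.comp {f : β → ℝ} (hf : Bdd f) (φ : α → β) : Bdd (f ∘ φ) := by
  obtain ⟨C, hC⟩ := hf
  exact ⟨C, fun x => hC (φ x)⟩

lemma Bdd.extend {f : α → ℝ} {e : β → ℝ} (hf : Bdd f) (he : Bdd e) (φ : α → β) :
    Bdd (extend φ f e) := by
  classical
  obtain ⟨C, hC⟩ := hf
  obtain ⟨D, hD⟩ := he
  refine ⟨max C D, fun b => ?_⟩
  rw [extend_def]
  split_ifs
  exacts [(hC _).trans (le_max_left _ _), (hD b).trans (le_max_right _ _)]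

lemma abs_extend_zero_sub_le {φ : α → β} {g₁ g₂ : α → ℝ} {C : ℝ}
    (h : ∀ a, |g₁ a - g₂ a| ≤ C) (hC : 0 ≤ C) (b : β) :
    |extend φ g₁ 0 b - extend φ g₂ 0 b| ≤ C := by
  classical
  simp only [extend_def]
  split_ifs
  exacts [h _, by simpa using hC]

end Bdd

section DBSC

variable {X Y : Type*} [TopologicalSpace X] [TopologicalSpace Y]

lemma LowerSemicontinuous.extend_const {φ : X → Y} (hφ : IsClosedEmbedding φ) {f : X → ℝ}
    (hf : LowerSemicontinuous f) {M : ℝ} (hM : ∀ x, f x ≤ M) :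
    LowerSemicontinuous (extend φ f fun _ => M) := by
  refine lowerSemicontinuous_iff_isOpen_preimage.mpr fun y => ?_
  by_cases hy : y < M
  · have : extend φ f (fun _ => M) ⁻¹' Ioi y = (φ '' (f ⁻¹' Iic y))ᶜ := by
      ext b
      by_cases hb : ∃ a, φ a = b
      · obtain ⟨a, rfl⟩ := hb
        simp [hφ.injective.extend_apply, hφ.injective.mem_set_image]
      · simp only [mem_preimage, extend_apply' _ _ _ hb, mem_Ioi, hy, mem_compl_iff,
          mem_image, true_iff]
        exact fun ⟨a, _, ha⟩ => hb ⟨a, ha⟩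
    rw [this]
    exact (hφ.isClosedMap _ (hf.isClosed_preimage y)).isOpen_compl
  · have : extend φ f (fun _ => M) ⁻¹' Ioi y = ∅ := by
      ext b
      by_cases hb : ∃ a, φ a = b
      · obtain ⟨a, rfl⟩ := hb
        simpa [hφ.injective.extend_apply] using (hM a).trans (not_lt.mp hy)
      · simpa [extend_apply' _ _ _ hb] using not_lt.mp hy
    rw [this]
    exact isOpen_empty

lemma DBSC.bdd {g : X → ℝ} (hg : DBSC g) : Bdd g := by
  obtain ⟨h, k, hh, hk, -, -, rfl⟩ := hg
  simpa [sub_eq_add_neg] using hh.add hk.neg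

lemma DBSC.zero : DBSC (0 : X → ℝ) :=
  ⟨0, 0, ⟨0, by simp⟩, ⟨0, by simp⟩, lowerSemicontinuous_const, lowerSemicontinuous_const,
    (sub_zero _).symm⟩

lemma DBSC.add {f g : X → ℝ} (hf : DBSC f) (hg : DBSC g) : DBSC (f + g) := by
  obtain ⟨h₁, k₁, hh₁, hk₁, lh₁, lk₁, rfl⟩ := hf
  obtain ⟨h₂, k₂, hh₂, hk₂, lh₂, lk₂, rfl⟩ := hg
  exact ⟨h₁ + h₂, k₁ + k₂, hh₁.add hh₂, hk₁.add hk₂, lh₁.add lh₂, lk₁.add lk₂, by abel⟩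

lemma DBSC.neg {g : X → ℝ} (hg : DBSC g) : DBSC (-g) := by
  obtain ⟨h, k, hh, hk, lh, lk, rfl⟩ := hg
  exact ⟨k, h, hk, hh, lk, lh, neg_sub h k⟩

lemma DBSC.sub {f g : X → ℝ} (hf : DBSC f) (hg : DBSC g) : DBSC (f - g) := by
  simpa [sub_eq_add_neg] using hf.add hg.neg

lemma DBSC.indicator_const {F : Set X} (hF : IsClosed F) (c : ℝ) :
    DBSC (F.indicator fun _ => c) := by
  wlog hc : 0 ≤ c generalizing c
  · convert (this (-c) (by linarith)).neg using 1
    ext x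
    by_cases hx : x ∈ F <;> simp [hx]
  refine ⟨fun _ => c, Fᶜ.indicator fun _ => c, ⟨|c|, fun _ => le_rfl⟩, ⟨|c|, fun x => ?_⟩,
    lowerSemicontinuous_const, hF.isOpen_compl.lowerSemicontinuous_indicator hc,
    by rw [indicator_compl, sub_sub_cancel]⟩
  by_cases hx : x ∈ Fᶜ <;> simp [hx, abs_nonneg]

lemma DBSC.comp {g : Y → ℝ} (hg : DBSC g) {φ : X → Y} (hφ : Continuous φ) : DBSC (g ∘ φ) := by
  obtain ⟨h, k, hh, hk, lh, lk, rfl⟩ := hg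
  exact ⟨h ∘ φ, k ∘ φ, hh.comp φ, hk.comp φ, lh.comp hφ, lk.comp hφ, rfl⟩

lemma DBSC.extend_zero {g : X → ℝ} (hg : DBSC g) {φ : X → Y} (hφ : IsClosedEmbedding φ) :
    DBSC (extend φ g 0) := by
  obtain ⟨h, k, ⟨C, hC⟩, ⟨D, hD⟩, lh, lk, rfl⟩ := hg
  have hM : Bdd fun _ : Y => max C D := ⟨|max C D|, fun _ => le_rfl⟩
  refine ⟨extend φ h fun _ => max C D, extend φ k fun _ => max C D,
    Bdd.extend ⟨C, hC⟩ hM φ, Bdd.extend ⟨D, hD⟩ hM φ,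
    lh.extend_const hφ fun x => (le_abs_self _).trans ((hC x).trans (le_max_left _ _)),
    lk.extend_const hφ fun x => (le_abs_self _).trans ((hD x).trans (le_max_right _ _)), ?_⟩
  rw [← extend_sub, sub_self]

end DBSC

section Sequences

lemma exists_seq_of_forall_exists {α : Type*} {P : ℕ → α → Prop} {R : ℕ → α → α → Prop}
    (h₀ : ∃ a, P 0 a) (hstep : ∀ i a, P i a → ∃ b, P (i + 1) b ∧ R i a b) :
    ∃ y : ℕ → α, ∀ i, P i (y i) ∧ R i (y i) (y (i + 1)) := by
  choose! next hnextP hnextR using hstep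
  obtain ⟨a, ha⟩ := h₀
  let y : ℕ → α := fun i => Nat.rec a next i
  have hy : ∀ i, P i (y i) := fun i => by
    induction i with
    | zero => exact ha
    | succ i ih => exact hnextP i _ ih
  exact ⟨y, fun i => ⟨hy i, hnextR i _ (hy i)⟩⟩

lemma tendsto_atTop_of_one_div_le_sub {s : ℕ → ℝ} (h : ∀ i : ℕ, 1 / (i + 1 : ℝ) ≤ s (i + 1) - s i) :
    Tendsto s atTop atTop := by
  have hsum : ∀ n, ∑ i ∈ Finset.range n, 1 / (i + 1 : ℝ) ≤ s n - s 0 := fun n => by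
    rw [← Finset.sum_range_sub s n]
    exact Finset.sum_le_sum fun i _ => h i
  exact tendsto_atTop_mono (fun n => by linarith [hsum n])
    (tendsto_atTop_add_const_left _ (s 0) Real.tendsto_sum_range_one_div_nat_succ_atTop)

lemma abs_sub_sub_two_mul_lt_add_sub_add {a b a' b' δ : ℝ} (ha : a - δ < a') (hb : b - δ < b') :
    |(a' - b') - (a - b)| - 2 * δ < (a' + b') - (a + b) := by
  rw [sub_lt_iff_lt_add, abs_lt]
  constructor <;> linarith

variable {α : Type*} {u : ℕ → α → ℝ} {f : α → ℝ}

lemma uniformCauchy_of_abs_sub_le (hu : ∀ n x, |u n x - f x| ≤ 1 / (n + 1)) {ε : ℝ}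
    (hε : 0 < ε) : ∃ N : ℕ, ∀ m ≥ N, ∀ n ≥ N, ∀ x, |u m x - u n x| ≤ ε := by
  obtain ⟨N, hN⟩ := exists_nat_one_div_lt (half_pos hε)
  have hclose : ∀ n ≥ N, ∀ x, |u n x - f x| ≤ ε / 2 := fun n hn x =>
    (hu n x).trans ((Nat.one_div_le_one_div hn).trans hN.le)
  refine ⟨N, fun m hm n hn x => ?_⟩
  calc |u m x - u n x| ≤ |u m x - f x| + |f x - u n x| := abs_sub_le _ _ _
    _ ≤ ε / 2 + ε / 2 := by
      rw [abs_sub_comm (f x)]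
      exact add_le_add (hclose m hm x) (hclose n hn x)
    _ = ε := add_halves ε

lemma eq_of_uniform_limit (hu : ∀ n x, |u n x - f x| ≤ 1 / (n + 1)) {g : α → ℝ}
    (hg : ∀ ε : ℝ, 0 < ε → ∃ N : ℕ, ∀ n ≥ N, ∀ x, |u n x - g x| ≤ ε) : g = f := by
  funext x
  refine eq_of_forall_dist_le fun ε hε => ?_
  obtain ⟨N, hN⟩ := hg (ε / 2) (half_pos hε)
  obtain ⟨M, hM⟩ := exists_nat_one_div_lt (half_pos hε)
  have hn := hN (max N M) (le_max_left _ _) x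
  have hf := (hu (max N M) x).trans ((Nat.one_div_le_one_div (le_max_right N M)).trans hM.le)
  calc dist (g x) (f x) ≤ |u (max N M) x - g x| + |u (max N M) x - f x| := by
        rw [Real.dist_eq, abs_sub_comm (u _ x)]
        exact abs_sub_le _ _ _
    _ ≤ ε / 2 + ε / 2 := add_le_add hn hf
    _ = ε := add_halves ε

end Sequences

instance : Uncountable (ℕ → Bool) := by
  rw [← Cardinal.aleph0_lt_mk_iff]
  simpa using Cardinal.cantor Cardinal.aleph0

lemma not_countable_of_mem_nhds_nat_bool {U : Set (ℕ → Bool)} {w : ℕ → Bool} (hU : U ∈ 𝓝 w) :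
    ¬ U.Countable := by
  obtain ⟨t, ⟨x, N, rfl⟩, hw, ht⟩ :=
    (PiNat.isTopologicalBasis_cylinders fun _ => Bool).mem_nhds_iff.mp hU
  rw [← PiNat.mem_cylinder_iff_eq.mp hw] at ht
  let pad : (ℕ → Bool) → (ℕ → Bool) := fun v m => if m < N then w m else v (m - N)
  have hpad : Injective pad := fun v v' h => funext fun l => by
    simpa [pad] using congr_fun h (l + N)
  have hpadU : pad ⁻¹' U = univ :=
    eq_univ_of_forall fun v => ht fun m hm => by simp [pad, hm]
  intro hUc
  exact not_countable (countable_univ_iff.mp (hpadU ▸ hUc.preimage hpad))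

abbrev CantorGrid : Type := ℕ → ℕ → Bool

namespace CantorGrid

def truncated (i : ℕ) : Set CantorGrid := {x | ∀ j, i ≤ j → x j = ⊥}

def level (i : ℕ) : Set CantorGrid := truncated (i + 1) \ truncated i

lemma truncated_mono : Monotone truncated := fun _ _ hij _ hx j hj => hx j (hij.trans hj)

lemma isClosed_truncated (i : ℕ) : IsClosed (truncated i) := by
  have : truncated i = ⋂ j ≥ i, {x | x j = ⊥} := by
    ext x
    simp [truncated]
  rw [this]
  exact isClosed_biInter fun j _ => isClosed_eq (continuous_apply j) continuous_const

lemma eq_of_mem_level {x : CantorGrid} {i j : ℕ} (hi : x ∈ level i) (hj : x ∈ level j) :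
    i = j := by
  by_contra hne
  rcases Nat.lt_or_gt_of_ne hne with h | h
  · exact hj.2 (truncated_mono h hi.1)
  · exact hi.2 (truncated_mono h hj.1)

lemma exists_mem_level_mem_notMem {C U : Set CantorGrid} (hC : C.Countable) {i : ℕ}
    {y : CantorGrid} (hy : y ∈ truncated i) (hU : U ∈ 𝓝 y) : ∃ z ∈ level i, z ∈ U ∧ z ∉ C := by
  -- Replacing the (zero) row `i` of `y` by a nonzero row close to zero lands in `level i ∩ U`,
  -- and there are uncountably many such rows.
  set e : (ℕ → Bool) → CantorGrid := update y i
  have he : Injective e := update_injective y i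
  have hey : e ⊥ = y := by
    rw [← hy i le_rfl]
    exact update_eq_self i y
  have hU' : e ⁻¹' U ∈ 𝓝 (⊥ : ℕ → Bool) :=
    (continuous_const.update i continuous_id).continuousAt.preimage_mem_nhds (hey ▸ hU)
  have hnot : ¬ e ⁻¹' U ⊆ e ⁻¹' C ∪ {⊥} := fun h =>
    not_countable_of_mem_nhds_nat_bool hU' (((hC.preimage he).union (countable_singleton _)).mono h)
  obtain ⟨w, hwU, hw⟩ := not_subset.mp hnot
  simp only [mem_union, mem_preimage, mem_singleton_iff, not_or] at hw
  refine ⟨e w, ⟨fun j hj => ?_, fun h => hw.2 ?_⟩, hwU, hw.1⟩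
  · show update y i w j = ⊥
    rw [update_of_ne (show j ≠ i by omega)]
    exact hy j (by omega)
  · simpa [e] using h i le_rfl

noncomputable def alt (i : ℕ) : ℝ := (-1) ^ i / (i + 1)

lemma abs_alt (i : ℕ) : |alt i| = 1 / (i + 1) := by
  rw [alt, abs_div, abs_pow, abs_neg, abs_one, one_pow, abs_of_pos (by positivity)]

lemma abs_alt_succ_sub (i : ℕ) : |alt (i + 1) - alt i| = |alt (i + 1)| + |alt i| := by
  have : alt (i + 1) - alt i = (-1) ^ (i + 1) * (1 / (i + 1 + 1) + 1 / (i + 1)) := by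
    simp only [alt, pow_succ]
    push_cast
    ring
  rw [this, abs_mul, abs_pow, abs_neg, abs_one, one_pow, one_mul, abs_of_pos (by positivity),
    abs_alt, abs_alt]
  push_cast
  ring

open Classical in
noncomputable def levelFun (x : CantorGrid) : ℝ :=
  if h : ∃ i, x ∈ level i then alt h.choose else 0

lemma levelFun_of_mem_level {x : CantorGrid} {i : ℕ} (hx : x ∈ level i) : levelFun x = alt i := by
  have h : ∃ j, x ∈ level j := ⟨i, hx⟩
  rw [levelFun, dif_pos h, eq_of_mem_level h.choose_spec hx]

noncomputable def levelApprox (n : ℕ) : CantorGrid → ℝ := (truncated n).indicator levelFun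

lemma abs_levelApprox_sub_levelFun_le (n : ℕ) (x : CantorGrid) :
    |levelApprox n x - levelFun x| ≤ 1 / (n + 1) := by
  by_cases hn : x ∈ truncated n
  · simp only [levelApprox, indicator_of_mem hn, sub_self, abs_zero]
    positivity
  rw [levelApprox, indicator_of_notMem hn, zero_sub, abs_neg]
  by_cases hx : ∃ i, x ∈ level i
  · obtain ⟨i, hi⟩ := hx
    have hni : n ≤ i := by
      by_contra! h
      exact hn (truncated_mono h hi.1)
    rw [levelFun_of_mem_level hi, abs_alt]
    exact Nat.one_div_le_one_div hni
  · rw [levelFun, dif_neg hx, abs_zero]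
    positivity

lemma levelApprox_zero : levelApprox 0 = 0 := by
  ext x
  refine indicator_apply_eq_zero.mpr fun hx => dif_neg ?_
  rintro ⟨i, hi⟩
  exact hi.2 (truncated_mono (Nat.zero_le i) hx)

lemma levelApprox_succ_sub (n : ℕ) : levelApprox (n + 1) - levelApprox n =
    (truncated (n + 1)).indicator (fun _ => alt n) - (truncated n).indicator (fun _ => alt n) := by
  rw [levelApprox, levelApprox, ← indicator_sdiff (truncated_mono n.le_succ),
    ← indicator_sdiff (truncated_mono n.le_succ)]
  exact indicator_congr fun x hx => levelFun_of_mem_level hx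

lemma dbsc_levelApprox (n : ℕ) : DBSC (levelApprox n) := by
  induction n with
  | zero => exact levelApprox_zero ▸ DBSC.zero
  | succ n ih =>
    have := ih.add ((DBSC.indicator_const (isClosed_truncated (n + 1)) (alt n)).sub
      (DBSC.indicator_const (isClosed_truncated n) (alt n)))
    rwa [← levelApprox_succ_sub, add_sub_cancel] at this

theorem not_countable_levelFun_ne {g : CantorGrid → ℝ} (hg : DBSC g) :
    ¬ {x | levelFun x ≠ g x}.Countable := by
  intro hC
  obtain ⟨h, k, ⟨Ch, hCh⟩, ⟨Ck, hCk⟩, hh, hk, rfl⟩ := hg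
  set C := {x | levelFun x ≠ (h - k) x}
  -- The tolerance `|alt (i + 1)| / 2` at step `i` makes `h + k` gain at least `|alt i|`.
  have hδ : ∀ i, 0 < |alt (i + 1)| / 2 := fun i => by
    rw [abs_alt]
    positivity
  obtain ⟨y, hy⟩ := exists_seq_of_forall_exists
    (P := fun i z => z ∈ level i ∧ z ∉ C)
    (R := fun i z z' => h z - |alt (i + 1)| / 2 < h z' ∧ k z - |alt (i + 1)| / 2 < k z')
    (by
      obtain ⟨z, hz, -, hzC⟩ :=
        exists_mem_level_mem_notMem hC (fun j _ => rfl : (⊥ : CantorGrid) ∈ truncated 0) univ_mem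
      exact ⟨z, hz, hzC⟩)
    (fun i z hz => by
      obtain ⟨z', hz', hz'U, hz'C⟩ := exists_mem_level_mem_notMem hC hz.1.1
        ((hh z (h z - |alt (i + 1)| / 2) (by linarith [hδ i])).and
          (hk z (k z - |alt (i + 1)| / 2) (by linarith [hδ i])))
      exact ⟨z', ⟨hz', hz'C⟩, hz'U⟩)
  have hval : ∀ i, h (y i) - k (y i) = alt i := fun i => by
    rw [← levelFun_of_mem_level (hy i).1.1]
    exact (not_not.mp (hy i).1.2).symm
  have hinc : ∀ i : ℕ, 1 / (i + 1 : ℝ) ≤ (h (y (i + 1)) + k (y (i + 1))) - (h (y i) + k (y i)) :=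
    fun i => by
      have := abs_sub_sub_two_mul_lt_add_sub_add (hy i).2.1 (hy i).2.2
      rw [hval, hval, abs_alt_succ_sub, abs_alt i] at this
      linarith
  have hgrow := tendsto_atTop_of_one_div_le_sub (s := fun i => h (y i) + k (y i)) hinc
  obtain ⟨n, hn⟩ := (hgrow.eventually_gt_atTop (Ch + Ck)).exists
  linarith [le_abs_self (h (y n)), le_abs_self (k (y n)), hCh (y n), hCk (y n)]

end CantorGrid

lemma exists_isClosedEmbedding_cantorGrid (K : Type*) [TopologicalSpace K] [PolishSpace K]
    [Nonempty K] [PerfectSpace K] : ∃ φ : CantorGrid → K, IsClosedEmbedding φ := by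
  let := TopologicalSpace.upgradeIsCompletelyMetrizable K
  obtain ⟨ψ, -, hψc, hψi⟩ :=
    (PerfectSpace.univ_perfect (α := K)).exists_nat_bool_injection univ_nonempty
  let flatten : CantorGrid → (ℕ → Bool) := fun x n => x n.unpair.1 n.unpair.2
  have hflatten : Injective flatten := fun x x' h => funext₂ fun j l => by
    simpa [flatten] using congr_fun h (Nat.pair j l)
  exact ⟨ψ ∘ flatten, (hψc.comp (by fun_prop)).isClosedEmbedding (hψi.comp hflatten)⟩

open CantorGrid in
/-- Let K be a perfect Polish space. Then the sequential monotone closure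
CD_ω(K)^{σm}, realized in B(K) as S = {f ∈ B(K) : ∃ g ∈ DBSC(K), [f≠g] at most
countable}, is not uniformly complete: the principal ideal generated by the constant
function 1 (which is all of S) is not complete under the order-unit norm ‖·‖_{1_K},
i.e. there is a ‖·‖_∞-Cauchy sequence in S with no ‖·‖_∞-limit in S. -/
theorem stmt15 {K : Type*} [TopologicalSpace K] [PolishSpace K] [Nonempty K]
    (hperfect : ∀ x : K, ¬ IsOpen ({x} : Set K))
    (S : Set (K → ℝ))
    (hS : S = {f | Bdd f ∧ ∃ g : K → ℝ, DBSC g ∧ {x | f x ≠ g x}.Countable}) :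
    ∃ u : ℕ → K → ℝ, (∀ n, u n ∈ S) ∧
      (∀ ε : ℝ, 0 < ε → ∃ N : ℕ, ∀ m ≥ N, ∀ n ≥ N, ∀ x, |u m x - u n x| ≤ ε) ∧
      ¬ ∃ f ∈ S, ∀ ε : ℝ, 0 < ε → ∃ N : ℕ, ∀ n ≥ N, ∀ x, |u n x - f x| ≤ ε := by
  have : PerfectSpace K := perfectSpace_iff_forall_not_isolated.mpr fun x =>
    ⟨fun h => hperfect x ((isOpen_singleton_iff_punctured_nhds x).mpr h)⟩
  obtain ⟨φ, hφ⟩ := exists_isClosedEmbedding_cantorGrid K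
  have hu : ∀ n p, |extend φ (levelApprox n) 0 p - extend φ levelFun 0 p| ≤ 1 / (n + 1) :=
    fun n => abs_extend_zero_sub_le (abs_levelApprox_sub_levelFun_le n) (by positivity)
  subst hS
  refine ⟨fun n => extend φ (levelApprox n) 0, fun n => ?_,
    fun ε hε => uniformCauchy_of_abs_sub_le hu hε, ?_⟩
  · have hd := (dbsc_levelApprox n).extend_zero hφ
    exact ⟨hd.bdd, _, hd, by simp⟩
  · rintro ⟨f, ⟨-, g, hg, hC⟩, hf⟩
    obtain rfl := eq_of_uniform_limit hu hf
    refine not_countable_levelFun_ne (hg.comp hφ.continuous) ((hC.preimage hφ.injective).mono ?_)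
    intro x hx
    simpa [hφ.injective.extend_apply] using hx
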